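/- arXiv:2007.00797 — 3 statements merged into one kernel-verified Lean document; each statement's English description precedes it below -/
import Mathlib

section
/- Let u ∈ ℝ^k with ‖u‖₂ < 1, set c = 3/(1 - ‖u‖₂), and let K > 0. If y, θ ∈ ℝ^k satisfy ‖y‖₂ ≤ K and ‖θ‖₂ ≥ cK, then ‖y - θ‖₂ - ‖y‖₂ - ⟨u,θ⟩ ≥ ‖θ‖₂ / c. -/
open scoped RealInnerProductSpace

/-- Key pointwise inequality: if `‖u‖ < 1`, `c = 3/(1-‖u‖)`, `K > 0`,
`‖y‖ ≤ K` and `‖θ‖ ≥ c*K`, then `‖y-θ‖ - ‖y‖ - ⟪u,θ⟫ ≥ ‖θ‖/c`. -/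
theorem stmt2 {k : ℕ} (u y θ : EuclideanSpace ℝ (Fin k)) (hu : ‖u‖ < 1)
    (c : ℝ) (hc : c = 3 / (1 - ‖u‖)) (K : ℝ) (hK : 0 < K)
    (hy : ‖y‖ ≤ K) (hθ : c * K ≤ ‖θ‖) :
    ‖θ‖ / c ≤ ‖y - θ‖ - ‖y‖ - ⟪u, θ⟫ := by
  have h1 : (0:ℝ) < 1 - ‖u‖ := by linarith
  have hcpos : 0 < c := by rw [hc]; positivity
  have hc3 : c * (1 - ‖u‖) = 3 := by rw [hc]; field_simp
  have hip : ⟪u, θ⟫ ≤ ‖u‖ * ‖θ‖ := real_inner_le_norm u θ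
  have htri : ‖θ‖ - ‖y‖ ≤ ‖y - θ‖ := by
    have := norm_sub_norm_le θ y
    rw [norm_sub_rev]; linarith
  have hθK : 3 * K ≤ ‖θ‖ * (1 - ‖u‖) := by
    calc 3 * K = c * (1 - ‖u‖) * K := by rw [hc3]
    _ ≤ ‖θ‖ * (1 - ‖u‖) := by nlinarith
  rw [div_le_iff₀ hcpos]
  nlinarith [norm_nonneg θ, norm_nonneg u]
end

section
/- Let P be a Borel probability measure on ℝ^k, let u ∈ ℝ^k with ‖u‖₂ < 1, let c = 3/(1-‖u‖₂), and let 0 < ε < (1/c)/((1/c) + ‖u‖₂ + 1). Suppose K > 0 satisfies P(‖Y‖₂ ≤ K) > 1 - ε. Then for every θ ∈ ℝ^k with ‖θ‖₂ ≥ cK, the expectation M(θ) = ∫ (‖y-θ‖₂ - ‖y‖₂ - ⟨u,θ⟩) dP(y) satisfies M(θ) ≥ ‖θ‖₂·(1/c - (1 + ‖u‖₂ + 1/c)·ε) > 0. -/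
open scoped RealInnerProductSpace
open MeasureTheory

/-! On the ball `‖y‖ ≤ K` the integrand of `M(θ)` is at least `(1 - ‖u‖)‖θ‖ - 2K ≥ ‖θ‖ / c`,
and everywhere it is at least `-(1 + ‖u‖)‖θ‖`. Since the ball carries mass more than `1 - ε`,
`M(θ) ≥ ‖θ‖ / c - ε (‖θ‖ / c + (1 + ‖u‖)‖θ‖)`, which is positive by the choice of `ε`. -/

theorem le_integral_of_const_le_on_of_const_le {α : Type*} [MeasurableSpace α] {μ : Measure α}
    [IsProbabilityMeasure μ] {f : α → ℝ} {s : Set α} {a b : ℝ} (hf : Integrable f μ)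
    (hs : MeasurableSet s) (ha : ∀ x ∈ s, a ≤ f x) (hb : ∀ x, b ≤ f x) :
    a * μ.real s + b * (1 - μ.real s) ≤ ∫ x, f x ∂μ := by
  rw [← integral_add_compl hs hf, ← probReal_compl_eq_one_sub hs]
  exact add_le_add
    (setIntegral_ge_of_const_le_real hs (measure_ne_top μ s) ha hf.integrableOn)
    (setIntegral_ge_of_const_le_real hs.compl (measure_ne_top μ _) (fun x _ ↦ hb x)
      hf.integrableOn)

section GeometricQuantile

variable {E : Type*} [NormedAddCommGroup E] [InnerProductSpace ℝ E]

theorem abs_norm_sub_sub_norm_sub_inner_le (u θ y : E) :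
    |‖y - θ‖ - ‖y‖ - ⟪u, θ⟫| ≤ (1 + ‖u‖) * ‖θ‖ := by
  have hnorm : |‖y - θ‖ - ‖y‖| ≤ ‖θ‖ := by
    simpa using abs_norm_sub_norm_le (y - θ) y
  calc |‖y - θ‖ - ‖y‖ - ⟪u, θ⟫| ≤ |‖y - θ‖ - ‖y‖| + |⟪u, θ⟫| := abs_sub _ _
    _ ≤ ‖θ‖ + ‖u‖ * ‖θ‖ := add_le_add hnorm (abs_real_inner_le_norm u θ)
    _ = (1 + ‖u‖) * ‖θ‖ := by ring

theorem integrable_norm_sub_sub_norm_sub_inner [MeasurableSpace E] [OpensMeasurableSpace E]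
    (μ : Measure E) [IsFiniteMeasure μ] (u θ : E) :
    Integrable (fun y ↦ ‖y - θ‖ - ‖y‖ - ⟪u, θ⟫) μ := by
  have hcont : Continuous fun y ↦ ‖y - θ‖ - ‖y‖ - ⟪u, θ⟫ := by fun_prop
  exact (integrable_const ((1 + ‖u‖) * ‖θ‖)).mono' hcont.aestronglyMeasurable
    (.of_forall fun y ↦ abs_norm_sub_sub_norm_sub_inner_le u θ y)

theorem sub_two_mul_le_norm_sub_sub_norm_sub_inner (u θ : E) {y : E} {K : ℝ} (hy : ‖y‖ ≤ K) :
    (1 - ‖u‖) * ‖θ‖ - 2 * K ≤ ‖y - θ‖ - ‖y‖ - ⟪u, θ⟫ := by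
  have hθ : ‖θ‖ - ‖y‖ ≤ ‖y - θ‖ := by
    simpa [norm_sub_rev] using norm_sub_norm_le θ y
  have hinner : ⟪u, θ⟫ ≤ ‖u‖ * ‖θ‖ := real_inner_le_norm u θ
  linarith

end GeometricQuantile

theorem stmt4_general {k : ℕ} (P : Measure (EuclideanSpace ℝ (Fin k)))
    [IsProbabilityMeasure P]
    (u : EuclideanSpace ℝ (Fin k)) (hu : ‖u‖ < 1)
    (c : ℝ) (hc : c = 3 / (1 - ‖u‖))
    (ε : ℝ) (hε' : ε < (1 / c) / (1 / c + ‖u‖ + 1))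
    (K : ℝ) (hK : 0 < K)
    (hPK : 1 - ε < (P {y | ‖y‖ ≤ K}).toReal) :
    ∀ θ : EuclideanSpace ℝ (Fin k), c * K ≤ ‖θ‖ →
      ‖θ‖ * (1 / c - (1 + ‖u‖ + 1 / c) * ε)
          ≤ ∫ y, (‖y - θ‖ - ‖y‖ - ⟪u, θ⟫) ∂P
        ∧ 0 < ‖θ‖ * (1 / c - (1 + ‖u‖ + 1 / c) * ε) := by
  intro θ hθ
  have hc0 : 0 < c := by rw [hc]; exact div_pos three_pos (by linarith)
  have hcinv : 1 / c = (1 - ‖u‖) / 3 := by rw [hc, one_div_div]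
  have hKθ : K ≤ ‖θ‖ * (1 / c) := by
    rw [mul_one_div, le_div_iff₀ hc0]; linarith
  have hθ0 : 0 < ‖θ‖ := (mul_pos hc0 hK).trans_le hθ
  have hε : (1 + ‖u‖ + 1 / c) * ε < 1 / c := by
    rw [lt_div_iff₀ (by positivity)] at hε'; linarith
  refine ⟨?_, mul_pos hθ0 (by linarith)⟩
  have hball : ∀ y ∈ {y : EuclideanSpace ℝ (Fin k) | ‖y‖ ≤ K},
      ‖θ‖ * (1 / c) ≤ ‖y - θ‖ - ‖y‖ - ⟪u, θ⟫ := fun y hy ↦ by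
    have := sub_two_mul_le_norm_sub_sub_norm_sub_inner u θ hy
    rw [hcinv] at hKθ ⊢; linarith
  have hbound := le_integral_of_const_le_on_of_const_le
    (integrable_norm_sub_sub_norm_sub_inner P u θ) (measurableSet_le (by fun_prop) (by fun_prop))
    hball (fun y ↦ neg_le_of_abs_le (abs_norm_sub_sub_norm_sub_inner_le u θ y))
  rw [← measureReal_def] at hPK
  have hgap : 0 ≤ ‖θ‖ * (1 / c) + (1 + ‖u‖) * ‖θ‖ := by positivity
  -- `hbound` is nondecreasing in `p = P(‖Y‖ ≤ K)`, so `p > 1 - ε` may be substituted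
  nlinarith [mul_le_mul_of_nonneg_left hPK.le hgap]

/-- If `P(‖Y‖ ≤ K) > 1 - ε` with `ε` small enough, then for `‖θ‖ ≥ c*K` the
geometric-quantile objective `M(θ) = ∫ (‖y-θ‖ - ‖y‖ - ⟪u,θ⟫) dP(y)` satisfies
`M(θ) ≥ ‖θ‖·(1/c - (1 + ‖u‖ + 1/c)·ε) > 0`. -/
theorem stmt4 {k : ℕ} (P : Measure (EuclideanSpace ℝ (Fin k)))
    [IsProbabilityMeasure P]
    (u : EuclideanSpace ℝ (Fin k)) (hu : ‖u‖ < 1)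
    (c : ℝ) (hc : c = 3 / (1 - ‖u‖))
    (ε : ℝ) (hε : 0 < ε) (hε' : ε < (1 / c) / (1 / c + ‖u‖ + 1))
    (K : ℝ) (hK : 0 < K)
    (hPK : 1 - ε < (P {y | ‖y‖ ≤ K}).toReal) :
    ∀ θ : EuclideanSpace ℝ (Fin k), c * K ≤ ‖θ‖ →
      ‖θ‖ * (1 / c - (1 + ‖u‖ + 1 / c) * ε)
          ≤ ∫ y, (‖y - θ‖ - ‖y‖ - ⟪u, θ⟫) ∂P
        ∧ 0 < ‖θ‖ * (1 / c - (1 + ‖u‖ + 1 / c) * ε) :=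
  stmt4_general P u hu c hc ε hε' K hK hPK
end

section
/- Let P be a Borel probability measure on ℝ^k and u ∈ ℝ^k with ‖u‖₂ < 1. Then any minimizer θ* of the map θ ↦ ∫ (‖y-θ‖₂ - ‖y‖₂ - ⟨u,θ⟩) dP(y) satisfies ‖θ*‖₂ ≤ cK, where c = 3/(1-‖u‖₂) and K is any positive number such that P(‖Y‖₂ ≤ K) > 1 - ε for some 0 < ε < (1/c)/((1/c) + ‖u‖₂ + 1). -/
open scoped RealInnerProductSpace
open MeasureTheory

/-!
Write `M(θ) = ∫ (‖y - θ‖ - ‖y‖ - ⟪u, θ⟫) dP(y)` and `p = P(‖Y‖ ≤ K)`. The integrand is at least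
`‖θ‖ - 2K - ⟪u, θ⟫` where `‖y‖ ≤ K` and at least `-‖θ‖ - ⟪u, θ⟫` everywhere, so
`M(θ) ≥ (2p - 1 - ‖u‖) ‖θ‖ - 2Kp`. A minimizer satisfies `M(θ*) ≤ M(0) = 0`, hence
`‖θ*‖ ≤ 2Kp / (2p - 1 - ‖u‖)`; the right-hand side decreases in `p`, and the hypothesis on `ε`
is exactly what makes its value at `p = 1 - ε` at most `3K / (1 - ‖u‖)`.
-/

section NormSubSubNorm

variable {E : Type*} [NormedAddCommGroup E] [MeasurableSpace E] [OpensMeasurableSpace E]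

theorem integrable_norm_sub_sub_norm (P : Measure E) [IsFiniteMeasure P] (θ : E) :
    Integrable (fun y => ‖y - θ‖ - ‖y‖) P := by
  refine (integrable_const ‖θ‖).mono' (by fun_prop) (.of_forall fun y => ?_)
  simpa [Real.norm_eq_abs] using abs_norm_sub_norm_le (y - θ) y

theorem integral_norm_sub_sub_norm_ge (P : Measure E) [IsProbabilityMeasure P] (θ : E) (K : ℝ) :
    (2 * P.real {y | ‖y‖ ≤ K} - 1) * ‖θ‖ - 2 * K * P.real {y | ‖y‖ ≤ K}
      ≤ ∫ y, (‖y - θ‖ - ‖y‖) ∂P := by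
  set A := {y : E | ‖y‖ ≤ K}
  have hA : MeasurableSet A := measurableSet_le measurable_norm measurable_const
  have h_minorant : ∀ y, -‖θ‖ + A.indicator (fun _ => 2 * ‖θ‖ - 2 * K) y ≤ ‖y - θ‖ - ‖y‖ := by
    intro y
    have h_far : ‖y‖ - ‖y - θ‖ ≤ ‖θ‖ := by simpa using norm_sub_norm_le y (y - θ)
    have h_near : ‖θ‖ - ‖y‖ ≤ ‖y - θ‖ := by simpa [norm_sub_rev] using norm_sub_norm_le θ y
    by_cases hy : y ∈ A
    · rw [Set.indicator_of_mem hy]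
      have : ‖y‖ ≤ K := hy
      linarith
    · rw [Set.indicator_of_notMem hy]
      linarith
  have h_int : Integrable (A.indicator fun _ => 2 * ‖θ‖ - 2 * K) P :=
    (integrable_const _).indicator hA
  calc (2 * P.real A - 1) * ‖θ‖ - 2 * K * P.real A
      = ∫ y, (-‖θ‖ + A.indicator (fun _ => 2 * ‖θ‖ - 2 * K) y) ∂P := by
        rw [integral_add (integrable_const _) h_int, integral_indicator_const _ hA]
        simp only [integral_const, probReal_univ, smul_eq_mul]
        ring
    _ ≤ ∫ y, (‖y - θ‖ - ‖y‖) ∂P :=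
        integral_mono ((integrable_const _).add h_int) (integrable_norm_sub_sub_norm P θ)
          h_minorant

end NormSubSubNorm

section GeometricQuantile

variable {E : Type*} [NormedAddCommGroup E] [InnerProductSpace ℝ E] [MeasurableSpace E]

noncomputable def geometricQuantileObjective (P : Measure E) (u θ : E) : ℝ :=
  ∫ y, (‖y - θ‖ - ‖y‖ - ⟪u, θ⟫) ∂P

@[simp]
theorem geometricQuantileObjective_zero (P : Measure E) (u : E) :
    geometricQuantileObjective P u 0 = 0 := by
  simp [geometricQuantileObjective]

theorem geometricQuantileObjective_ge [OpensMeasurableSpace E] (P : Measure E)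
    [IsProbabilityMeasure P] (u θ : E) (K : ℝ) :
    (2 * P.real {y | ‖y‖ ≤ K} - 1 - ‖u‖) * ‖θ‖ - 2 * K * P.real {y | ‖y‖ ≤ K}
      ≤ geometricQuantileObjective P u θ := by
  have h_split : geometricQuantileObjective P u θ = ∫ y, (‖y - θ‖ - ‖y‖) ∂P - ⟪u, θ⟫ := by
    rw [geometricQuantileObjective,
      integral_sub (integrable_norm_sub_sub_norm P θ) (integrable_const _)]
    simp
  rw [h_split]
  linarith [integral_norm_sub_sub_norm_ge P θ K, real_inner_le_norm u θ]

end GeometricQuantile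

theorem mul_one_sub_le_three_mul {a t p K : ℝ} (ht₀ : 0 ≤ t) (ht₁ : t < 1)
    (hp : 3 + 3 * t < p * (4 + 2 * t)) (ha : 0 ≤ a) (h : (2 * p - 1 - t) * a ≤ 2 * K * p) :
    a * (1 - t) ≤ 3 * K := by
  have hq : 0 < 2 * p - 1 - t := by nlinarith
  have hK : 0 ≤ K := by nlinarith
  refine le_of_mul_le_mul_right ?_ hq
  calc a * (1 - t) * (2 * p - 1 - t) ≤ 2 * K * p * (1 - t) := by nlinarith
    _ ≤ 3 * K * (2 * p - 1 - t) := by nlinarith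

theorem stmt5_general {k : ℕ} (P : Measure (EuclideanSpace ℝ (Fin k)))
    [IsProbabilityMeasure P]
    (u : EuclideanSpace ℝ (Fin k)) (hu : ‖u‖ < 1)
    (c : ℝ) (hc : c = 3 / (1 - ‖u‖))
    (ε : ℝ) (hε' : ε < (1 / c) / (1 / c + ‖u‖ + 1))
    (K : ℝ)
    (hPK : 1 - ε < (P {y | ‖y‖ ≤ K}).toReal)
    (θstar : EuclideanSpace ℝ (Fin k))
    (hmin : ∀ θ : EuclideanSpace ℝ (Fin k),
      ∫ y, (‖y - θstar‖ - ‖y‖ - ⟪u, θstar⟫) ∂P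
        ≤ ∫ y, (‖y - θ‖ - ‖y‖ - ⟪u, θ⟫) ∂P) :
    ‖θstar‖ ≤ c * K := by
  have ht : 0 < 1 - ‖u‖ := by linarith
  have hε_lt : ε * (4 + 2 * ‖u‖) < 1 - ‖u‖ := by
    have h_eq : (1 - ‖u‖) / 3 / ((1 - ‖u‖) / 3 + ‖u‖ + 1) = (1 - ‖u‖) / (4 + 2 * ‖u‖) := by
      field_simp
      ring
    rw [hc, one_div_div, h_eq, lt_div_iff₀ (by positivity)] at hε'
    exact hε'
  have hM : geometricQuantileObjective P u θstar ≤ 0 :=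
    (hmin 0).trans_eq (geometricQuantileObjective_zero P u)
  have hp : 3 + 3 * ‖u‖ < P.real {y | ‖y‖ ≤ K} * (4 + 2 * ‖u‖) := by
    rw [measureReal_def]
    nlinarith [norm_nonneg u]
  have h := mul_one_sub_le_three_mul (K := K) (norm_nonneg u) hu hp (norm_nonneg θstar)
    (by linarith [geometricQuantileObjective_ge P u θstar K])
  rw [hc, div_mul_eq_mul_div, le_div_iff₀ ht]
  linarith

/-- Any minimizer of the geometric-quantile objective lies in the ball of
radius `c*K`, where `K` is such that `P(‖Y‖ ≤ K) > 1 - ε`. -/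
theorem stmt5 {k : ℕ} (P : Measure (EuclideanSpace ℝ (Fin k)))
    [IsProbabilityMeasure P]
    (u : EuclideanSpace ℝ (Fin k)) (hu : ‖u‖ < 1)
    (c : ℝ) (hc : c = 3 / (1 - ‖u‖))
    (ε : ℝ) (hε : 0 < ε) (hε' : ε < (1 / c) / (1 / c + ‖u‖ + 1))
    (K : ℝ) (hK : 0 < K)
    (hPK : 1 - ε < (P {y | ‖y‖ ≤ K}).toReal)
    (θstar : EuclideanSpace ℝ (Fin k))
    (hmin : ∀ θ : EuclideanSpace ℝ (Fin k),
      ∫ y, (‖y - θstar‖ - ‖y‖ - ⟪u, θstar⟫) ∂P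
        ≤ ∫ y, (‖y - θ‖ - ‖y‖ - ⟪u, θ⟫) ∂P) :
    ‖θstar‖ ≤ c * K :=
  stmt5_general P u hu c hc ε hε' K hPK θstar hmin
end
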